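/- Let G be a (d,λ)-expander graph and F ⊆ V a set with adversarial density α_F < 1 − λ. Then the subgraph of G induced by V∖F is connected. -/

import Mathlib

open Matrix Finset

/-- An orthonormal eigenbasis of a real symmetric matrix, with eigenvalues listed in
decreasing order (with multiplicity). -/
def EigSystem {ι : Type} [Fintype ι] {k : ℕ} (M : Matrix ι ι ℝ)
    (μ : Fin k → ℝ) (φ : Fin k → ι → ℝ) : Prop :=
  Fintype.card ι = k ∧
  (∀ a b, ∑ i, φ a i * φ b i = if a = b then (1 : ℝ) else 0) ∧
  (∀ a, M.mulVec (φ a) = μ a • φ a) ∧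
  (∀ a b : Fin k, a ≤ b → μ b ≤ μ a)

/-!
If `V ∖ F` splits into nonempty parts `S` and `T` with no edges between them, every vertex of
`S` has at most `α d` neighbours in `F` and none in `T`, hence at least `(1 - α) d` in `S`;
likewise for `T`. So on the span of the indicators of `S` and `T` the quadratic form of the
normalized adjacency matrix is at least `1 - α` times the squared norm. That plane contains a
nonzero vector orthogonal to the top eigenvector, so the second eigenvalue is at least
`1 - α > λ`, a contradiction.
-/

namespace EigSystem

variable {ι : Type} [Fintype ι] {k : ℕ} {M : Matrix ι ι ℝ} {μ : Fin k → ℝ} {φ : Fin k → ι → ℝ}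

theorem eq_sum_dotProduct_smul (h : EigSystem M μ φ) (x : ι → ℝ) :
    x = ∑ a, (φ a ⬝ᵥ x) • φ a := by
  classical
  have hcomplete : (of φ)ᵀ * of φ = 1 := by
    refine (mul_eq_one_comm_of_card_eq (Fin k) ι ℝ (by rw [Fintype.card_fin, h.1])).1 ?_
    ext a b
    simpa [mul_apply, one_apply] using h.2.1 a b
  calc x = (of φ)ᵀ *ᵥ (of φ *ᵥ x) := by rw [mulVec_mulVec, hcomplete, one_mulVec]
    _ = ∑ a, (φ a ⬝ᵥ x) • φ a := by
      ext i
      simp [mulVec, dotProduct, Finset.sum_apply, mul_comm]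

theorem dotProduct_self_eq_sum (h : EigSystem M μ φ) (x : ι → ℝ) :
    x ⬝ᵥ x = ∑ a, (φ a ⬝ᵥ x) ^ 2 := by
  nth_rewrite 1 [h.eq_sum_dotProduct_smul x]
  simp [sum_dotProduct, smul_dotProduct, sq]

theorem dotProduct_mulVec_eq_sum (h : EigSystem M μ φ) (x : ι → ℝ) :
    x ⬝ᵥ M *ᵥ x = ∑ a, μ a * (φ a ⬝ᵥ x) ^ 2 := by
  nth_rewrite 2 [h.eq_sum_dotProduct_smul x]
  rw [dotProduct_comm]
  simp only [mulVec_sum, mulVec_smul, h.2.2.1, sum_dotProduct, smul_dotProduct, smul_eq_mul]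
  exact sum_congr rfl fun a _ => by ring

theorem dotProduct_mulVec_le (h : EigSystem M μ φ) {j : Fin k} {x : ι → ℝ}
    (hx : ∀ a < j, φ a ⬝ᵥ x = 0) : x ⬝ᵥ M *ᵥ x ≤ μ j * (x ⬝ᵥ x) := by
  rw [h.dotProduct_mulVec_eq_sum, h.dotProduct_self_eq_sum, mul_sum]
  refine sum_le_sum fun a _ => ?_
  rcases lt_or_ge a j with ha | ha
  · simp [hx a ha]
  · exact mul_le_mul_of_nonneg_right (h.2.2.2 j a ha) (sq_nonneg _)

/-- Courant–Fischer for the second eigenvalue: some nonzero combination of `y` and `z` is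
orthogonal to the top eigenvector. -/
theorem le_eigenvalue_one (h : EigSystem M μ φ) (hk : 1 < k) {c : ℝ} {y z : ι → ℝ}
    (hy : y ≠ 0) (hz : z ≠ 0) (hyz : y ⬝ᵥ z = 0)
    (hc : ∀ a b : ℝ, c * ((a • y + b • z) ⬝ᵥ (a • y + b • z)) ≤
      (a • y + b • z) ⬝ᵥ M *ᵥ (a • y + b • z)) :
    c ≤ μ ⟨1, hk⟩ := by
  set p := φ ⟨0, by omega⟩ ⬝ᵥ y
  set q := φ ⟨0, by omega⟩ ⬝ᵥ z
  obtain ⟨a, b, hab, hpq⟩ : ∃ a b : ℝ, (a ≠ 0 ∨ b ≠ 0) ∧ a * p + b * q = 0 := by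
    by_cases hq : q = 0
    · exact ⟨0, 1, by simp, by simp [hq]⟩
    · exact ⟨q, -p, Or.inl hq, by ring⟩
  set x := a • y + b • z
  have horth : ∀ i < (⟨1, hk⟩ : Fin k), φ i ⬝ᵥ x = 0 := by
    intro i hi
    rw [show i = ⟨0, by omega⟩ from Fin.ext (Nat.lt_one_iff.1 hi)]
    simp only [x, dotProduct_add, dotProduct_smul, smul_eq_mul]
    exact hpq
  have hpos : 0 < x ⬝ᵥ x := by
    have hyy : 0 < y ⬝ᵥ y := by simpa using dotProduct_self_star_pos_iff.2 hy
    have hzz : 0 < z ⬝ᵥ z := by simpa using dotProduct_self_star_pos_iff.2 hz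
    have hxx : x ⬝ᵥ x = a ^ 2 * (y ⬝ᵥ y) + b ^ 2 * (z ⬝ᵥ z) := by
      simp only [x, dotProduct_add, add_dotProduct, dotProduct_smul, smul_dotProduct, smul_eq_mul,
        dotProduct_comm z y, hyz]
      ring
    rw [hxx]
    rcases hab with ha | hb <;> positivity
  exact le_of_mul_le_mul_right ((hc a b).trans (h.dotProduct_mulVec_le horth)) hpos

end EigSystem

theorem Finset.indicator_one_dotProduct_indicator_one {V : Type*} [Fintype V] [DecidableEq V]
    (S T : Finset V) :
    (S : Set V).indicator 1 ⬝ᵥ (T : Set V).indicator 1 = (#(S ∩ T) : ℝ) := by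
  simp only [dotProduct, Set.indicator_apply, mem_coe, Pi.one_apply, mul_boole, ← ite_and,
    sum_boole]
  congr 2
  ext
  simp [and_comm]

theorem Finset.indicator_one_ne_zero {V M₀ : Type*} [MulZeroOneClass M₀] [Nontrivial M₀]
    {S : Finset V} (hS : S.Nonempty) : (S : Set V).indicator (1 : V → M₀) ≠ 0 := by
  obtain ⟨v, hv⟩ := hS
  exact fun h => by simpa [hv] using congrFun h v

namespace SimpleGraph

variable {V : Type*} [Fintype V] [DecidableEq V] {G : SimpleGraph V}

theorem exists_cut_of_not_connected_induce {s : Finset V} (hs : s.Nonempty)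
    (h : ¬(G.induce (s : Set V)).Connected) :
    ∃ S T : Finset V, S.Nonempty ∧ T.Nonempty ∧ Disjoint S T ∧ S ∪ T = s ∧
      ∀ v ∈ S, ∀ w ∈ T, ¬G.Adj v w := by
  obtain ⟨u, hu⟩ := hs
  obtain ⟨⟨w, hw⟩, huw⟩ : ∃ w, ¬(G.induce (s : Set V)).Reachable ⟨u, hu⟩ w := by
    by_contra! hall
    exact h ((connected_iff_exists_forall_reachable _).2 ⟨⟨u, hu⟩, hall⟩)
  classical
  refine ⟨({v | ∃ hv : v ∈ s, (G.induce (s : Set V)).Reachable ⟨u, hu⟩ ⟨v, hv⟩} : Finset V),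
    ({v | ∃ hv : v ∈ s, ¬(G.induce (s : Set V)).Reachable ⟨u, hu⟩ ⟨v, hv⟩} : Finset V),
    ⟨u, by simp [hu]⟩, ⟨w, by simpa using ⟨hw, huw⟩⟩, ?_, ?_, ?_⟩
  · simp only [Finset.disjoint_left, mem_filter, mem_univ, true_and]
    rintro v ⟨_, hreach⟩ ⟨_, hnreach⟩
    exact hnreach hreach
  · ext v
    by_cases hv : v ∈ s <;> simp [hv, em]
  · simp only [mem_filter, mem_univ, true_and]
    rintro v ⟨_, hreach⟩ w ⟨_, hnreach⟩ hadj
    exact hnreach (hreach.trans (Adj.reachable (G := G.induce (s : Set V)) hadj))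

variable [DecidableRel G.Adj]

theorem degree_le_card_filter_adj_add_card_inter_of_cut {F U W : Finset V}
    (hUW : U ∪ W = Fᶜ) (hcut : ∀ v ∈ U, ∀ w ∈ W, ¬G.Adj v w) {v : V} (hv : v ∈ U) :
    G.degree v ≤ #{w ∈ F | G.Adj v w} + #(G.neighborFinset v ∩ U) := by
  refine (card_le_card fun w hw => ?_).trans (card_union_le _ _)
  rw [mem_neighborFinset] at hw
  by_cases hwF : w ∈ F
  · simp [hwF, hw]
  · have hwUW : w ∈ U ∪ W := by simpa [hUW] using hwF
    have hwU : w ∈ U := (mem_union.1 hwUW).resolve_right fun hwW => hcut v hv w hwW hw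
    simp [hw, hwU]

theorem indicator_dotProduct_adjMatrix_mulVec_indicator (S T : Finset V) :
    (S : Set V).indicator 1 ⬝ᵥ G.adjMatrix ℝ *ᵥ (T : Set V).indicator 1 =
      ∑ v ∈ S, (#(G.neighborFinset v ∩ T) : ℝ) := by
  simp [dotProduct, Set.indicator_apply]

theorem le_dotProduct_adjMatrix_mulVec_of_cut {S T : Finset V} {δ : ℝ}
    (hdisj : Disjoint S T) (hST : ∀ v ∈ S, ∀ w ∈ T, ¬G.Adj v w)
    (hS : ∀ v ∈ S, δ ≤ #(G.neighborFinset v ∩ S)) (hT : ∀ v ∈ T, δ ≤ #(G.neighborFinset v ∩ T))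
    {x : V → ℝ} (a b : ℝ) (hx : x = a • (S : Set V).indicator 1 + b • (T : Set V).indicator 1) :
    δ * (x ⬝ᵥ x) ≤ x ⬝ᵥ G.adjMatrix ℝ *ᵥ x := by
  have hinner : ∀ {U W : Finset V}, (∀ v ∈ U, ∀ w ∈ W, ¬G.Adj v w) →
      ∑ v ∈ U, (#(G.neighborFinset v ∩ W) : ℝ) = 0 := by
    intro U W hUW
    refine sum_eq_zero fun v hv => ?_
    simpa [Finset.eq_empty_iff_forall_notMem] using fun w hadj hw => hUW v hv w hw hadj
  have hSS : δ * #S ≤ ∑ v ∈ S, (#(G.neighborFinset v ∩ S) : ℝ) := by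
    simpa [mul_comm] using sum_le_sum hS
  have hTT : δ * #T ≤ ∑ v ∈ T, (#(G.neighborFinset v ∩ T) : ℝ) := by
    simpa [mul_comm] using sum_le_sum hT
  simp only [hx, dotProduct_add, add_dotProduct, mulVec_add, mulVec_smul, dotProduct_smul,
    smul_dotProduct, smul_eq_mul, Finset.indicator_one_dotProduct_indicator_one,
    indicator_dotProduct_adjMatrix_mulVec_indicator, inter_self,
    disjoint_iff_inter_eq_empty.1 hdisj, inter_comm T S, card_empty, Nat.cast_zero, hinner hST,
    hinner fun v hv w hw hadj => hST w hw v hv hadj.symm]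
  nlinarith [mul_le_mul_of_nonneg_left hSS (sq_nonneg a),
    mul_le_mul_of_nonneg_left hTT (sq_nonneg b)]

end SimpleGraph

/-- Let `G` be a `(d,λ)`-expander graph (a `d`-regular graph whose
normalized adjacency matrix has all non-leading eigenvalues at most `λ` in absolute
value) and `F ⊆ V` a set whose adversarial density
`α_F = max_{v ∉ F} |N(v) ∩ F| / d` satisfies `α_F < 1 − λ`.  Then the subgraph of
`G` induced by `V ∖ F` is connected. -/
theorem stmt_6 (n d : ℕ) (hd : 0 < d) (hn : 2 ≤ n)
    (G : SimpleGraph (Fin n)) [DecidableRel G.Adj] (hreg : G.IsRegularOfDegree d)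
    (μ : Fin n → ℝ) (φ : Fin n → Fin n → ℝ)
    (hA : EigSystem ((d : ℝ)⁻¹ • G.adjMatrix ℝ) μ φ)
    (lam : ℝ) (hlam : max |μ ⟨1, by omega⟩| |μ ⟨n - 1, by omega⟩| ≤ lam)
    (F : Finset (Fin n)) (hne : Fᶜ.Nonempty)
    (α : ℝ) (hα : α = Fᶜ.sup' hne fun v => ((F.filter (G.Adj v)).card : ℝ) / d)
    (hsmall : α < 1 - lam) :
    (G.induce {v : Fin n | v ∉ F}).Connected := by
  by_contra hdisconn
  obtain ⟨S, T, hS, hT, hdisj, hcover, hcut⟩ :=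
    G.exists_cut_of_not_connected_induce hne (by rwa [coe_compl])
  have hd0 : (0 : ℝ) < d := by exact_mod_cast hd
  have hfew : ∀ v ∉ F, (#{w ∈ F | G.Adj v w} : ℝ) ≤ α * d := by
    intro v hv
    rw [← div_le_iff₀ hd0, hα]
    exact le_sup' (fun v => (#{w ∈ F | G.Adj v w} : ℝ) / d) (by simpa using hv)
  have hinner : ∀ {U W : Finset (Fin n)}, U ∪ W = Fᶜ → (∀ v ∈ U, ∀ w ∈ W, ¬G.Adj v w) →
      ∀ v ∈ U, (1 - α) * d ≤ #(G.neighborFinset v ∩ U) := by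
    intro U W hUW hcut v hv
    have hdeg : (d : ℝ) ≤ #{w ∈ F | G.Adj v w} + #(G.neighborFinset v ∩ U) := by
      exact_mod_cast hreg v ▸ G.degree_le_card_filter_adj_add_card_inter_of_cut hUW hcut hv
    have hvF : v ∉ F := by simpa [hUW] using mem_union_left W hv
    linarith [hfew v hvF]
  have hgap : 1 - α ≤ μ ⟨1, by omega⟩ := by
    refine hA.le_eigenvalue_one (by omega) (indicator_one_ne_zero hS) (indicator_one_ne_zero hT)
      (by simp [indicator_one_dotProduct_indicator_one, disjoint_iff_inter_eq_empty.1 hdisj])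
      fun a b => ?_
    have := G.le_dotProduct_adjMatrix_mulVec_of_cut hdisj hcut (hinner hcover hcut)
      (hinner (union_comm S T ▸ hcover) fun v hv w hw hadj => hcut w hw v hv hadj.symm) a b rfl
    rw [smul_mulVec, dotProduct_smul, smul_eq_mul, le_inv_mul_iff₀ hd0]
    linarith
  linarith [le_abs_self (μ ⟨1, by omega⟩), le_max_left |μ ⟨1, by omega⟩| |μ ⟨n - 1, by omega⟩|]
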